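/- arXiv:2307.14608 — 4 statements merged into one kernel-verified Lean document; each statement's English description precedes it below -/
import Mathlib

section
/- In the Verma module M_g(h1,h2,c1,c2) over the N=1 BMS superalgebra, for any m ∈ ℤ_+ and any monomial M^j·1 = M_{-j_s}^{a_s}⋯M_{-j_1}^{a_1}·1 with all j_i ≤ m, one has L_m · M^j·1 = (2m·h2 + (m^3-m)/12·c2) · (∂/∂M_{-m})(M^j)·1, where ∂/∂M_{-m} is the formal partial derivative (Leibniz rule with ∂M_{-n}/∂M_{-m} = δ_{m,n} and ∂1/∂M_{-m} = 0). -/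
/-- A representation of the N=1 BMS superalgebra on a complex vector space `V`,
with `Q k` denoting the action of the odd generator `Q_{k+1/2}`, and the central
elements acting by the scalars `c1`, `c2`. -/
structure BMSRep (V : Type*) [AddCommGroup V] [Module ℂ V] where
  L : ℤ → Module.End ℂ V
  M : ℤ → Module.End ℂ V
  Q : ℤ → Module.End ℂ V
  c1 : ℂ
  c2 : ℂ
  comm_LL : ∀ m n : ℤ, ⁅L m, L n⁆ = ((m : ℂ) - n) • L (m + n)
      + (if m + n = 0 then ((m : ℂ)^3 - m) / 12 * c1 else 0) • (1 : Module.End ℂ V)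
  comm_LM : ∀ m n : ℤ, ⁅L m, M n⁆ = ((m : ℂ) - n) • M (m + n)
      + (if m + n = 0 then ((m : ℂ)^3 - m) / 12 * c2 else 0) • (1 : Module.End ℂ V)
  comm_MM : ∀ m n : ℤ, ⁅M m, M n⁆ = 0
  comm_LQ : ∀ m k : ℤ, ⁅L m, Q k⁆ = ((m : ℂ) / 2 - ((k : ℂ) + 1/2)) • Q (m + k)
  comm_MQ : ∀ m k : ℤ, ⁅M m, Q k⁆ = 0
  anti_QQ : ∀ k l : ℤ, Q k * Q l + Q l * Q k = (2 : ℂ) • M (k + l + 1)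
      + (if k + l + 1 = 0 then (((k : ℂ) + 1/2)^2 - 1/4) / 3 * c2 else 0) • (1 : Module.End ℂ V)

namespace BMSRep

variable {V : Type*} [AddCommGroup V] [Module ℂ V]

/-- A submodule invariant under the action. -/
def Invariant (ρ : BMSRep V) (W : Submodule ℂ V) : Prop :=
  ∀ w ∈ W, ∀ n : ℤ, ρ.L n w ∈ W ∧ ρ.M n w ∈ W ∧ ρ.Q n w ∈ W

/-- Simplicity: `V` is nonzero and has no nontrivial invariant submodule. -/
def IsSimple (ρ : BMSRep V) : Prop :=
  (∃ v : V, v ≠ 0) ∧ ∀ W : Submodule ℂ V, ρ.Invariant W → W = ⊥ ∨ W = ⊤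

/-- Smoothness: every vector is killed by all sufficiently positive modes. -/
def IsSmooth (ρ : BMSRep V) : Prop :=
  ∀ w : V, ∃ N : ℤ, ∀ i : ℤ, N ≤ i → ρ.L i w = 0 ∧ ρ.M i w = 0 ∧ ρ.Q (i - 1) w = 0

end BMSRep

/-- `tower f N = f N * ⋯ * f 2 * f 1` (empty product for `N = 0`). -/
def tower {V : Type*} [AddCommGroup V] [Module ℂ V]
    (f : ℕ → Module.End ℂ V) : ℕ → Module.End ℂ V
  | 0 => 1
  | n + 1 => f (n + 1) * tower f n

/-- `towerR f N = f 1 * f 2 * ⋯ * f N`. -/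
def towerR {V : Type*} [AddCommGroup V] [Module ℂ V]
    (f : ℕ → Module.End ℂ V) : ℕ → Module.End ℂ V
  | 0 => 1
  | n + 1 => towerR f n * f (n + 1)

namespace BMSRep

variable {V : Type*} [AddCommGroup V] [Module ℂ V]

/-- `⋯ L_{-2}^{i_2} L_{-1}^{i_1}` as an endomorphism. -/
noncomputable def monL (ρ : BMSRep V) (i : ℕ →₀ ℕ) : Module.End ℂ V :=
  tower (fun a => (ρ.L (-(a : ℤ)))^(i a)) (i.support.sup id)

/-- `⋯ M_{-2}^{j_2} M_{-1}^{j_1}` as an endomorphism. -/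
noncomputable def monM (ρ : BMSRep V) (j : ℕ →₀ ℕ) : Module.End ℂ V :=
  tower (fun a => (ρ.M (-(a : ℤ)))^(j a)) (j.support.sup id)

/-- `⋯ Q_{-2+1/2}^{k_2} Q_{-1+1/2}^{k_1}` as an endomorphism, where `K` is the
set of `t ≥ 1` with `k_t = 1`. -/
noncomputable def monQ (ρ : BMSRep V) (K : Finset ℕ) : Module.End ℂ V :=
  tower (fun t => if t ∈ K then ρ.Q (-(t : ℤ)) else 1) (K.sup id)

/-- `L_1^{i_1} L_2^{i_2} ⋯` (raising operators) as an endomorphism. -/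
noncomputable def raiseL (ρ : BMSRep V) (i : ℕ →₀ ℕ) : Module.End ℂ V :=
  towerR (fun a => (ρ.L (a : ℤ))^(i a)) (i.support.sup id)

end BMSRep

/-- Index set for the PBW monomial basis `Q^k M^j L^i · 1` of a Verma module:
exponents of `L_{-a}`, `M_{-a}` for `a ≥ 1` and the set of `t ≥ 1` with a
factor `Q_{-t+1/2}`. -/
structure VIdx where
  i : ℕ →₀ ℕ
  j : ℕ →₀ ℕ
  K : Finset ℕ
  hi : i 0 = 0
  hj : j 0 = 0
  hK : 0 ∉ K

/-- Twice the weight `w(i,j,k) = Σ a i_a + Σ a j_a + Σ_{t∈K} (t - 1/2)`. -/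
def VIdx.wt2 (p : VIdx) : ℕ :=
  2 * (p.i.sum fun a m => a * m) + 2 * (p.j.sum fun a m => a * m)
    + (p.K.sum fun t => 2 * t - 1)

namespace BMSRep

variable {V : Type*} [AddCommGroup V] [Module ℂ V]

/-- The PBW monomial `Q^k M^j L^i` attached to a Verma index. -/
noncomputable def mon (ρ : BMSRep V) (p : VIdx) : Module.End ℂ V :=
  ρ.monQ p.K * ρ.monM p.j * ρ.monL p.i

/-- `(V, v)` is (a copy of) the Verma module `M_g(h1, h2, c1, c2)`:
`v` is a highest weight vector of weight `(h1, h2)` and the PBW monomials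
applied to `v` form a basis of `V`. -/
structure IsVerma (ρ : BMSRep V) (v : V) (h1 h2 : ℂ) : Prop where
  hwL : ∀ n : ℤ, 1 ≤ n → ρ.L n v = 0
  hwM : ∀ n : ℤ, 1 ≤ n → ρ.M n v = 0
  hwQ : ∀ k : ℤ, 0 ≤ k → ρ.Q k v = 0
  hL0 : ρ.L 0 v = h1 • v
  hM0 : ρ.M 0 v = h2 • v
  indep : LinearIndependent ℂ (fun p : VIdx => ρ.mon p v)
  span : Submodule.span ℂ (Set.range fun p : VIdx => ρ.mon p v) = ⊤

end BMSRep

section Aux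

variable {V : Type*} [AddCommGroup V] [Module ℂ V]

lemma tower_congr (f g : ℕ → Module.End ℂ V) (N : ℕ)
    (h : ∀ a, 1 ≤ a → a ≤ N → f a = g a) : tower f N = tower g N := by
  induction N with
  | zero => rfl
  | succ n ih =>
    simp only [tower]
    rw [h (n+1) (by omega) le_rfl, ih (fun a h1 h2 => h a h1 (by omega))]

lemma tower_ext (f : ℕ → Module.End ℂ V) (N₀ N : ℕ) (hN : N₀ ≤ N)
    (h : ∀ a, N₀ < a → f a = 1) : tower f N = tower f N₀ := by
  induction N with
  | zero => rw [Nat.le_zero.mp hN]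
  | succ n ih =>
    rcases eq_or_lt_of_le hN with h' | h'
    · rw [h']
    · simp only [tower]
      rw [h (n+1) (by omega), one_mul, ih (by omega)]

lemma BMSRep.commute_MM (ρ : BMSRep V) (a b : ℤ) : Commute (ρ.M a) (ρ.M b) := by
  have := ρ.comm_MM a b
  rw [Ring.lie_def, sub_eq_zero] at this
  exact this

lemma BMSRep.commute_M_tower (ρ : BMSRep V) (p : ℤ) (g : ℕ → ℕ) (N : ℕ) :
    Commute (ρ.M p) (tower (fun a => (ρ.M (-(a:ℤ)))^(g a)) N) := by
  induction N with
  | zero => exact Commute.one_right _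
  | succ n ih =>
    simp only [tower]
    exact ((ρ.commute_MM p _).pow_right _).mul_right ih

lemma BMSRep.L_mul_M (ρ : BMSRep V) (m : ℤ) (a : ℤ) :
    ρ.L m * ρ.M a = ρ.M a * ρ.L m + (((m : ℂ) - a) • ρ.M (m + a)
      + (if m + a = 0 then ((m:ℂ)^3 - m)/12 * ρ.c2 else 0) • 1) := by
  have := ρ.comm_LM m a
  rw [Ring.lie_def, sub_eq_iff_eq_add'] at this
  exact this

lemma BMSRep.commute_M_D (ρ : BMSRep V) (m : ℤ) (a : ℤ) :
    Commute (ρ.M a) (((m : ℂ) - a) • ρ.M (m + a)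
      + (if m + a = 0 then ((m:ℂ)^3 - m)/12 * ρ.c2 else 0) • 1) :=
  ((ρ.commute_MM a (m+a)).smul_right _).add_right ((Commute.one_right _).smul_right _)

lemma BMSRep.L_mul_M_pow (ρ : BMSRep V) (m a : ℤ) (k : ℕ) :
    ρ.L m * (ρ.M a)^(k+1) = (ρ.M a)^(k+1) * ρ.L m
      + ((k:ℂ)+1) • ((ρ.M a)^k * (((m : ℂ) - a) • ρ.M (m + a)
      + (if m + a = 0 then ((m:ℂ)^3 - m)/12 * ρ.c2 else 0) • 1)) := by
  set D : Module.End ℂ V := ((m : ℂ) - a) • ρ.M (m + a)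
      + (if m + a = 0 then ((m:ℂ)^3 - m)/12 * ρ.c2 else 0) • 1 with hD
  have hcomm : Commute (ρ.M a) D := ρ.commute_M_D m a
  induction k with
  | zero =>
    simp only [pow_one, pow_zero, one_mul, Nat.cast_zero, zero_add, one_smul]
    rw [hD]
    exact ρ.L_mul_M m a
  | succ k ih =>
    have h2 : ρ.L m * (ρ.M a)^(k+1+1) = (ρ.L m * (ρ.M a)^(k+1)) * ρ.M a := by
      rw [mul_assoc, ← pow_succ]
    rw [h2, ih, add_mul, smul_mul_assoc, mul_assoc ((ρ.M a)^k), ← hcomm.eq,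
      ← mul_assoc ((ρ.M a)^k), ← pow_succ, mul_assoc ((ρ.M a)^(k+1)),
      ρ.L_mul_M m a, mul_add, ← mul_assoc, ← pow_succ]
    push_cast
    module

lemma BMSRep.Mp_tower_eq_zero (ρ : BMSRep V) {v : V} {h1 h2 : ℂ}
    (hV : ρ.IsVerma v h1 h2) (p : ℤ) (hp : 1 ≤ p) (g : ℕ → ℕ) (N : ℕ) :
    ρ.M p (tower (fun a => (ρ.M (-(a:ℤ)))^(g a)) N v) = 0 := by
  have h := (ρ.commute_M_tower p g N).eq
  calc ρ.M p (tower (fun a => (ρ.M (-(a:ℤ)))^(g a)) N v)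
      = (ρ.M p * tower (fun a => (ρ.M (-(a:ℤ)))^(g a)) N) v := rfl
    _ = (tower (fun a => (ρ.M (-(a:ℤ)))^(g a)) N * ρ.M p) v := by rw [h]
    _ = tower (fun a => (ρ.M (-(a:ℤ)))^(g a)) N (ρ.M p v) := rfl
    _ = 0 := by rw [hV.hwM p hp, map_zero]

lemma BMSRep.M0_tower (ρ : BMSRep V) {v : V} {h1 h2 : ℂ}
    (hV : ρ.IsVerma v h1 h2) (g : ℕ → ℕ) (N : ℕ) :
    ρ.M 0 (tower (fun a => (ρ.M (-(a:ℤ)))^(g a)) N v)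
      = h2 • tower (fun a => (ρ.M (-(a:ℤ)))^(g a)) N v := by
  have h := (ρ.commute_M_tower 0 g N).eq
  calc ρ.M 0 (tower (fun a => (ρ.M (-(a:ℤ)))^(g a)) N v)
      = (ρ.M 0 * tower (fun a => (ρ.M (-(a:ℤ)))^(g a)) N) v := rfl
    _ = (tower (fun a => (ρ.M (-(a:ℤ)))^(g a)) N * ρ.M 0) v := by rw [h]
    _ = tower (fun a => (ρ.M (-(a:ℤ)))^(g a)) N (ρ.M 0 v) := rfl
    _ = h2 • tower (fun a => (ρ.M (-(a:ℤ)))^(g a)) N v := by rw [hV.hM0, map_smul]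

lemma BMSRep.key {V : Type*} [AddCommGroup V] [Module ℂ V]
    (ρ : BMSRep V) (v : V) (h1 h2 : ℂ) (hV : ρ.IsVerma v h1 h2)
    (m : ℕ) (hm : 1 ≤ m) :
    ∀ N : ℕ, N ≤ m → ∀ j : ℕ →₀ ℕ, (∀ a : ℕ, N < a → j a = 0) →
    ρ.L (m:ℤ) (tower (fun a => (ρ.M (-(a:ℤ)))^(j a)) N v)
      = ((2 * (m : ℂ) * h2 + ((m : ℂ)^3 - m) / 12 * ρ.c2) * (j m : ℂ)) •
        tower (fun a => (ρ.M (-(a:ℤ)))^(((j - Finsupp.single m 1 : ℕ →₀ ℕ) a))) N v := by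
  intro N
  induction N with
  | zero =>
    intro _ j hj
    have hjm : j m = 0 := hj m (by omega)
    simp [tower, hV.hwL (m:ℤ) (by exact_mod_cast hm), hjm]
  | succ n ih =>
    intro hNm j hj
    set C : ℂ := 2 * (m : ℂ) * h2 + ((m : ℂ)^3 - m) / 12 * ρ.c2 with hC
    set j'' : ℕ →₀ ℕ := j.erase (n+1) with hj''def
    have hj'' : ∀ a : ℕ, n < a → j'' a = 0 := by
      intro a ha
      rcases eq_or_ne a (n+1) with rfl | hne
      · exact Finsupp.erase_same
      · rw [hj''def, Finsupp.erase_ne hne]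
        exact hj a (by omega)
    have hTn : tower (fun a => (ρ.M (-(a:ℤ)))^(j a)) n
        = tower (fun a => (ρ.M (-(a:ℤ)))^(j'' a)) n := by
      apply tower_congr
      intro a _ ha2
      rw [hj''def, Finsupp.erase_ne (by omega)]
    set w := tower (fun a => (ρ.M (-(a:ℤ)))^(j'' a)) n v with hw
    have hstep : tower (fun a => (ρ.M (-(a:ℤ)))^(j a)) (n+1) v
        = ((ρ.M (-((n+1:ℕ):ℤ)))^(j (n+1))) w := by
      simp only [tower]
      rw [hTn]
      rfl
    rcases eq_or_lt_of_le hNm with heq | hlt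
    · -- n + 1 = m
      subst heq
      have hjm'' : j'' (n+1) = 0 := by rw [hj''def]; exact Finsupp.erase_same
      have hLw : ρ.L ((n+1:ℕ):ℤ) w = 0 := by
        rw [hw, ih (by omega) j'' hj'', hjm'']
        simp
      rcases Nat.eq_zero_or_eq_succ_pred (j (n+1)) with h0 | hk
      · -- exponent zero
        rw [hstep, h0, pow_zero, Module.End.one_apply, hLw]
        simp
      · set k := (j (n+1)).pred with hkdef
        have hM0w : ρ.M 0 w = h2 • w := by
          rw [hw]; exact ρ.M0_tower hV _ n
        have hsub : ((j - Finsupp.single (n+1) 1 : ℕ →₀ ℕ)) (n+1) = k := by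
          rw [Finsupp.tsub_apply, Finsupp.single_eq_same]
          omega
        have hTn' : tower (fun a => (ρ.M (-(a:ℤ)))^((j - Finsupp.single (n+1) 1 : ℕ →₀ ℕ) a)) n
            = tower (fun a => (ρ.M (-(a:ℤ)))^(j'' a)) n := by
          apply tower_congr
          intro b _ hb2
          rw [Finsupp.tsub_apply, Finsupp.single_eq_of_ne (by omega), Nat.sub_zero,
            hj''def, Finsupp.erase_ne (by omega)]
        have hRHS : tower (fun a => (ρ.M (-(a:ℤ)))^((j - Finsupp.single (n+1) 1 : ℕ →₀ ℕ) a)) (n+1) v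
            = ((ρ.M (-((n+1:ℕ):ℤ)))^k) w := by
          simp only [tower]
          rw [hsub, hTn']
          rfl
        rw [hstep, hk, hRHS]
        have happ : ρ.L ((n+1:ℕ):ℤ) (((ρ.M (-((n+1:ℕ):ℤ)))^(k+1)) w)
            = ((ρ.L ((n+1:ℕ):ℤ) * (ρ.M (-((n+1:ℕ):ℤ)))^(k+1))) w := rfl
        rw [happ, ρ.L_mul_M_pow ((n+1:ℕ):ℤ) (-((n+1:ℕ):ℤ)) k]
        have hif : ((n+1:ℕ):ℤ) + -((n+1:ℕ):ℤ) = 0 := by ring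
        rw [if_pos hif, hif]
        simp only [LinearMap.add_apply, Module.End.mul_apply, LinearMap.smul_apply,
          hLw, map_zero, LinearMap.zero_apply, zero_add, Module.End.one_apply]
        rw [hM0w]
        simp only [map_add, map_smul, smul_smul, smul_add, hC]
        match_scalars
        push_cast
        ring
    · -- n + 1 < m
      have hjm : j m = 0 := hj m (by omega)
      have hjm'' : j'' m = 0 := by
        rw [hj''def, Finsupp.erase_ne (by omega)]; exact hjm
      have hLw : ρ.L (m:ℤ) w = 0 := by
        rw [hw, ih (by omega) j'' hj'', hjm'']
        simp
      rw [hstep, hjm]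
      rcases Nat.eq_zero_or_eq_succ_pred (j (n+1)) with h0 | hk
      · rw [h0, pow_zero, Module.End.one_apply, hLw]
        simp
      · set k := (j (n+1)).pred
        rw [hk]
        have happ : ρ.L (m:ℤ) (((ρ.M (-((n+1:ℕ):ℤ)))^(k+1)) w)
            = ((ρ.L (m:ℤ) * (ρ.M (-((n+1:ℕ):ℤ)))^(k+1))) w := rfl
        rw [happ, ρ.L_mul_M_pow (m:ℤ) (-((n+1:ℕ):ℤ)) k]
        have hif : ¬ ((m:ℤ) + -((n+1:ℕ):ℤ) = 0) := by
          push_cast; omega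
        rw [if_neg hif]
        have hMkill : ρ.M ((m:ℤ) + -((n+1:ℕ):ℤ)) w = 0 :=
          ρ.Mp_tower_eq_zero hV _ (by push_cast; omega) _ n
        simp only [LinearMap.add_apply, Module.End.mul_apply, LinearMap.smul_apply,
          hLw, map_zero, LinearMap.zero_apply, hMkill, smul_zero, add_zero, zero_smul,
          zero_add]
        simp
end Aux


/-- In the Verma module, for `m ≥ 1` and a monomial `M^j · 1` with all indices
of `j` at most `m`, one has
`L_m · M^j · 1 = (2 m h2 + (m^3-m)/12 · c2) · (∂/∂M_{-m})(M^j) · 1`,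
where the formal partial derivative of the (commuting) monomial `M^j` is
`j_m · M^{j - ε_m}`. -/
theorem verma_L_on_M_monomial {V : Type*} [AddCommGroup V] [Module ℂ V]
    (ρ : BMSRep V) (v : V) (h1 h2 : ℂ) (hV : ρ.IsVerma v h1 h2)
    (m : ℕ) (hm : 1 ≤ m) (j : ℕ →₀ ℕ) (hj0 : j 0 = 0)
    (hjm : ∀ a ∈ j.support, a ≤ m) :
    ρ.L (m : ℤ) (ρ.monM j v)
      = ((2 * (m : ℂ) * h2 + ((m : ℂ)^3 - m) / 12 * ρ.c2) * (j m : ℂ)) •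
          ρ.monM (j - Finsupp.single m 1) v := by
  have hjtop : ∀ a : ℕ, m < a → j a = 0 := by
    intro a ha
    by_contra h
    exact absurd (hjm a (Finsupp.mem_support_iff.mpr h)) (by omega)
  have hsup : j.support.sup id ≤ m := Finset.sup_le (fun a ha => hjm a ha)
  have hsup' : (j - Finsupp.single m 1 : ℕ →₀ ℕ).support.sup id ≤ m := by
    apply Finset.sup_le
    intro a ha
    rw [Finsupp.mem_support_iff] at ha
    by_contra h
    simp only [id_eq] at h
    apply ha
    rw [Finsupp.tsub_apply]
    have := hjtop a (by omega)
    omega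
  have hz1 : ∀ a : ℕ, j.support.sup id < a → (ρ.M (-(a:ℤ)))^(j a) = 1 := by
    intro a ha
    have hja : j a = 0 := by
      by_contra h
      have := Finset.le_sup (f := id) (Finsupp.mem_support_iff.mpr h)
      simp only [id_eq] at this
      omega
    rw [hja, pow_zero]
  have hz2 : ∀ a : ℕ, (j - Finsupp.single m 1 : ℕ →₀ ℕ).support.sup id < a →
      (ρ.M (-(a:ℤ)))^((j - Finsupp.single m 1 : ℕ →₀ ℕ) a) = 1 := by
    intro a ha
    have hja : (j - Finsupp.single m 1 : ℕ →₀ ℕ) a = 0 := by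
      by_contra h
      have := Finset.le_sup (f := id) (Finsupp.mem_support_iff.mpr h)
      simp only [id_eq] at this
      omega
    rw [hja, pow_zero]
  have e1 : ρ.monM j = tower (fun a => (ρ.M (-(a:ℤ)))^(j a)) m := by
    rw [BMSRep.monM]
    exact (tower_ext _ _ m hsup hz1).symm
  have e2 : ρ.monM (j - Finsupp.single m 1)
      = tower (fun a => (ρ.M (-(a:ℤ)))^((j - Finsupp.single m 1 : ℕ →₀ ℕ) a)) m := by
    rw [BMSRep.monM]
    exact (tower_ext _ _ m hsup' hz2).symm
  rw [e1, e2]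
  exact ρ.key v h1 h2 hV m hm m le_rfl j hjtop
end

section
/- The Verma module M_g(0,0,c1,c2) over the N=1 BMS superalgebra is not simple; specifically, Q_{-1/2}·1 is a singular vector, i.e., it is annihilated by g_+ = span{L_n, M_n, Q_{n-1/2} : n ≥ 1}. -/
section Aux

namespace BMSRep

variable {V : Type*} [AddCommGroup V] [Module ℂ V] (ρ : BMSRep V)

lemma LL (m n : ℤ) (x : V) :
    ρ.L m (ρ.L n x) = ((m : ℂ) - n) • ρ.L (m + n) x
      + (if m + n = 0 then ((m : ℂ)^3 - m) / 12 * ρ.c1 else 0) • x + ρ.L n (ρ.L m x) := by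
  have h := LinearMap.congr_fun (ρ.comm_LL m n) x
  simp only [Ring.lie_def, LinearMap.sub_apply, Module.End.mul_apply, LinearMap.add_apply,
    LinearMap.smul_apply, Module.End.one_apply] at h
  exact eq_add_of_sub_eq h

lemma LM (m n : ℤ) (x : V) :
    ρ.L m (ρ.M n x) = ((m : ℂ) - n) • ρ.M (m + n) x
      + (if m + n = 0 then ((m : ℂ)^3 - m) / 12 * ρ.c2 else 0) • x + ρ.M n (ρ.L m x) := by
  have h := LinearMap.congr_fun (ρ.comm_LM m n) x
  simp only [Ring.lie_def, LinearMap.sub_apply, Module.End.mul_apply, LinearMap.add_apply,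
    LinearMap.smul_apply, Module.End.one_apply] at h
  exact eq_add_of_sub_eq h

lemma MM (m n : ℤ) (x : V) : ρ.M m (ρ.M n x) = ρ.M n (ρ.M m x) := by
  have h := LinearMap.congr_fun (ρ.comm_MM m n) x
  simp only [Ring.lie_def, LinearMap.sub_apply, Module.End.mul_apply, LinearMap.zero_apply] at h
  exact sub_eq_zero.mp h

lemma LQ (m k : ℤ) (x : V) :
    ρ.L m (ρ.Q k x) = ((m : ℂ) / 2 - ((k : ℂ) + 1/2)) • ρ.Q (m + k) x + ρ.Q k (ρ.L m x) := by
  have h := LinearMap.congr_fun (ρ.comm_LQ m k) x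
  simp only [Ring.lie_def, LinearMap.sub_apply, Module.End.mul_apply,
    LinearMap.smul_apply] at h
  exact eq_add_of_sub_eq h

lemma MQ (m k : ℤ) (x : V) : ρ.M m (ρ.Q k x) = ρ.Q k (ρ.M m x) := by
  have h := LinearMap.congr_fun (ρ.comm_MQ m k) x
  simp only [Ring.lie_def, LinearMap.sub_apply, Module.End.mul_apply, LinearMap.zero_apply] at h
  exact sub_eq_zero.mp h

lemma QQ (k l : ℤ) (x : V) :
    ρ.Q k (ρ.Q l x) = (2 : ℂ) • ρ.M (k + l + 1) x
      + (if k + l + 1 = 0 then (((k : ℂ) + 1/2)^2 - 1/4) / 3 * ρ.c2 else 0) • x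
      - ρ.Q l (ρ.Q k x) := by
  have h := LinearMap.congr_fun (ρ.anti_QQ k l) x
  simp only [LinearMap.add_apply, Module.End.mul_apply, LinearMap.smul_apply,
    Module.End.one_apply] at h
  exact eq_sub_of_add_eq h

lemma ML (m n : ℤ) (x : V) :
    ρ.M n (ρ.L m x) = ρ.L m (ρ.M n x) - ((m : ℂ) - n) • ρ.M (m + n) x
      - (if m + n = 0 then ((m : ℂ)^3 - m) / 12 * ρ.c2 else 0) • x := by
  rw [ρ.LM m n x]; abel

lemma QL (m k : ℤ) (x : V) :
    ρ.Q k (ρ.L m x) = ρ.L m (ρ.Q k x) - ((m : ℂ) / 2 - ((k : ℂ) + 1/2)) • ρ.Q (m + k) x := by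
  rw [ρ.LQ m k x]; abel

lemma QM (m k : ℤ) (x : V) : ρ.Q k (ρ.M m x) = ρ.M m (ρ.Q k x) := (ρ.MQ m k x).symm

/-- The lowering generators, indexed by `(a, kind)` with lowering index `a + 1`. -/
noncomputable def gen (ρ : BMSRep V) : ℕ × Fin 3 → Module.End ℂ V
  | (a, ⟨0, _⟩) => ρ.L (-((a : ℤ) + 1))
  | (a, ⟨1, _⟩) => ρ.M (-((a : ℤ) + 1))
  | (a, ⟨_ + 2, _⟩) => ρ.Q (-((a : ℤ) + 1))

@[simp] lemma gen_L (a : ℕ) : ρ.gen (a, 0) = ρ.L (-((a : ℤ) + 1)) := rfl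
@[simp] lemma gen_M (a : ℕ) : ρ.gen (a, 1) = ρ.M (-((a : ℤ) + 1)) := rfl
@[simp] lemma gen_Q (a : ℕ) : ρ.gen (a, 2) = ρ.Q (-((a : ℤ) + 1)) := rfl

/-- A word in the lowering generators. -/
noncomputable def wrd (ρ : BMSRep V) : List (ℕ × Fin 3) → Module.End ℂ V
  | [] => 1
  | g :: u => ρ.gen g * ρ.wrd u

@[simp] lemma wrd_nil : ρ.wrd [] = 1 := rfl
@[simp] lemma wrd_cons (g : ℕ × Fin 3) (u : List (ℕ × Fin 3)) :
    ρ.wrd (g :: u) = ρ.gen g * ρ.wrd u := rfl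

end BMSRep

/-- Twice the weight of a word of lowering generators, counting a `Q` with a
half-integer weight. -/
def wdeg : List (ℕ × Fin 3) → ℕ
  | [] => 0
  | g :: u => (if g.2 = 2 then 2 * g.1 + 1 else 2 * g.1 + 2) + wdeg u

end Aux

/-- The Verma module `M_g(0,0,c1,c2)` is not simple; specifically `Q_{-1/2}·1`
is a singular vector, i.e. it is annihilated by all `L_n, M_n, Q_{n-1/2}` with
`n ≥ 1`. -/
theorem verma_zero_not_simple {V : Type*} [AddCommGroup V] [Module ℂ V]
    (ρ : BMSRep V) (v : V) (hV : ρ.IsVerma v 0 0) :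
    (∀ n : ℤ, 1 ≤ n →
        ρ.L n (ρ.Q (-1) v) = 0 ∧ ρ.M n (ρ.Q (-1) v) = 0 ∧
        ρ.Q (n - 1) (ρ.Q (-1) v) = 0) ∧
    ¬ ρ.IsSimple := by
  obtain ⟨hwL, hwM, hwQ, hL0, hM0, indep, -⟩ := hV
  set w : V := ρ.Q (-1) v with hw
  -- Part 1: `w` is a singular vector.
  have sing : ∀ n : ℤ, 1 ≤ n →
      ρ.L n w = 0 ∧ ρ.M n w = 0 ∧ ρ.Q (n - 1) w = 0 := by
    intro n hn
    refine ⟨?_, ?_, ?_⟩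
    · rw [hw, ρ.LQ n (-1) v, hwL n hn, map_zero, add_zero,
        hwQ (n + -1) (by omega), smul_zero]
    · rw [hw, ρ.MQ n (-1) v, hwM n hn, map_zero]
    · rw [hw, ρ.QQ (n - 1) (-1) v, hwQ (n - 1) (by omega), map_zero, sub_zero,
        show n - 1 + -1 + 1 = n - 1 from by ring]
      rcases eq_or_lt_of_le hn with h1 | h1
      · rw [← h1]
        norm_num [hM0]
      · rw [hwM (n - 1) (by omega), if_neg (by omega), smul_zero, zero_add, zero_smul]
  have hq0 : ∀ m : ℤ, 0 ≤ m → ρ.Q m w = 0 := by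
    intro m hm
    have h := (sing (m + 1) (by omega)).2.2
    rwa [show m + 1 - 1 = m from by ring] at h
  have hL0w : ρ.L 0 w = (2⁻¹ : ℂ) • w := by
    rw [hw, ρ.LQ 0 (-1) v, hL0, zero_smul, map_zero, add_zero,
      show (0 : ℤ) + -1 = -1 from by ring]
    norm_num
  -- The invariant submodule generated by `w`.
  set W : Submodule ℂ V :=
    Submodule.span ℂ (Set.range fun u : List (ℕ × Fin 3) => ρ.wrd u w) with hWdef
  have hmemS : ∀ u : List (ℕ × Fin 3), ρ.wrd u w ∈ W :=
    fun u => Submodule.subset_span ⟨u, rfl⟩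
  have hwW : w ∈ W := by simpa using hmemS []
  have genW : ∀ g : ℕ × Fin 3, ∀ x ∈ W, ρ.gen g x ∈ W := by
    intro g x hx
    induction hx using Submodule.span_induction with
    | mem y hy =>
      obtain ⟨u, rfl⟩ := hy
      simpa using hmemS (g :: u)
    | zero => rw [map_zero]; exact zero_mem W
    | add a b _ _ ha hb => rw [map_add]; exact add_mem ha hb
    | smul c a _ ha => rw [map_smul]; exact Submodule.smul_mem W c ha
  have main : ∀ u : List (ℕ × Fin 3), ∀ n : ℤ,
      ρ.L n (ρ.wrd u w) ∈ W ∧ ρ.M n (ρ.wrd u w) ∈ W ∧ ρ.Q n (ρ.wrd u w) ∈ W := by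
    intro u
    induction u with
    | nil =>
      intro n
      simp only [BMSRep.wrd_nil, Module.End.one_apply]
      refine ⟨?_, ?_, ?_⟩
      · rcases lt_trichotomy n 0 with h | h | h
        · have hidx : -((((-n - 1).toNat : ℕ) : ℤ) + 1) = n := by omega
          have := genW ((-n - 1).toNat, 0) w hwW
          rwa [ρ.gen_L, hidx] at this
        · rw [h, hL0w]
          exact Submodule.smul_mem _ _ hwW
        · rw [(sing n h).1]; exact zero_mem _
      · rcases lt_trichotomy n 0 with h | h | h
        · have hidx : -((((-n - 1).toNat : ℕ) : ℤ) + 1) = n := by omega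
          have := genW ((-n - 1).toNat, 1) w hwW
          rwa [ρ.gen_M, hidx] at this
        · rw [h, hw, ρ.MQ 0 (-1) v, hM0, zero_smul, map_zero]; exact zero_mem _
        · rw [(sing n h).2.1]; exact zero_mem _
      · rcases lt_or_ge n 0 with h | h
        · have hidx : -((((-n - 1).toNat : ℕ) : ℤ) + 1) = n := by omega
          have := genW ((-n - 1).toNat, 2) w hwW
          rwa [ρ.gen_Q, hidx] at this
        · rw [hq0 n h]; exact zero_mem _
    | cons g u ih =>
      rcases g with ⟨a, i⟩
      intro n
      have hx : ρ.wrd u w ∈ W := hmemS u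
      fin_cases i
      · refine ⟨?_, ?_, ?_⟩
        · show ρ.L n (ρ.L (-((a : ℤ) + 1)) (ρ.wrd u w)) ∈ W
          rw [ρ.LL n (-((a : ℤ) + 1)) (ρ.wrd u w)]
          exact add_mem (add_mem (Submodule.smul_mem _ _ (ih _).1)
            (Submodule.smul_mem _ _ hx)) (genW (a, 0) _ (ih n).1)
        · show ρ.M n (ρ.L (-((a : ℤ) + 1)) (ρ.wrd u w)) ∈ W
          rw [ρ.ML (-((a : ℤ) + 1)) n (ρ.wrd u w)]
          exact sub_mem (sub_mem (genW (a, 0) _ (ih n).2.1)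
            (Submodule.smul_mem _ _ (ih _).2.1)) (Submodule.smul_mem _ _ hx)
        · show ρ.Q n (ρ.L (-((a : ℤ) + 1)) (ρ.wrd u w)) ∈ W
          rw [ρ.QL (-((a : ℤ) + 1)) n (ρ.wrd u w)]
          exact sub_mem (genW (a, 0) _ (ih n).2.2) (Submodule.smul_mem _ _ (ih _).2.2)
      · refine ⟨?_, ?_, ?_⟩
        · show ρ.L n (ρ.M (-((a : ℤ) + 1)) (ρ.wrd u w)) ∈ W
          rw [ρ.LM n (-((a : ℤ) + 1)) (ρ.wrd u w)]
          exact add_mem (add_mem (Submodule.smul_mem _ _ (ih _).2.1)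
            (Submodule.smul_mem _ _ hx)) (genW (a, 1) _ (ih n).1)
        · show ρ.M n (ρ.M (-((a : ℤ) + 1)) (ρ.wrd u w)) ∈ W
          rw [ρ.MM n (-((a : ℤ) + 1)) (ρ.wrd u w)]
          exact genW (a, 1) _ (ih n).2.1
        · show ρ.Q n (ρ.M (-((a : ℤ) + 1)) (ρ.wrd u w)) ∈ W
          rw [ρ.QM (-((a : ℤ) + 1)) n (ρ.wrd u w)]
          exact genW (a, 1) _ (ih n).2.2
      · refine ⟨?_, ?_, ?_⟩
        · show ρ.L n (ρ.Q (-((a : ℤ) + 1)) (ρ.wrd u w)) ∈ W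
          rw [ρ.LQ n (-((a : ℤ) + 1)) (ρ.wrd u w)]
          exact add_mem (Submodule.smul_mem _ _ (ih _).2.2) (genW (a, 2) _ (ih n).1)
        · show ρ.M n (ρ.Q (-((a : ℤ) + 1)) (ρ.wrd u w)) ∈ W
          rw [ρ.MQ n (-((a : ℤ) + 1)) (ρ.wrd u w)]
          exact genW (a, 2) _ (ih n).2.1
        · show ρ.Q n (ρ.Q (-((a : ℤ) + 1)) (ρ.wrd u w)) ∈ W
          rw [ρ.QQ n (-((a : ℤ) + 1)) (ρ.wrd u w)]
          exact sub_mem (add_mem (Submodule.smul_mem _ _ (ih _).2.1)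
            (Submodule.smul_mem _ _ hx)) (genW (a, 2) _ (ih n).2.2)
  have hinv : ρ.Invariant W := by
    intro x hx
    induction hx using Submodule.span_induction with
    | mem y hy => obtain ⟨u, rfl⟩ := hy; exact main u
    | zero =>
      intro n
      simp only [map_zero]
      exact ⟨zero_mem _, zero_mem _, zero_mem _⟩
    | add a b _ _ ha hb =>
      intro n
      simp only [map_add]
      exact ⟨add_mem (ha n).1 (hb n).1, add_mem (ha n).2.1 (hb n).2.1,
        add_mem (ha n).2.2 (hb n).2.2⟩
    | smul c a _ ha =>
      intro n
      simp only [map_smul]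
      exact ⟨Submodule.smul_mem _ _ (ha n).1, Submodule.smul_mem _ _ (ha n).2.1,
        Submodule.smul_mem _ _ (ha n).2.2⟩
  -- every generator of `W` is an `L 0`-eigenvector with nonzero eigenvalue
  have eig : ∀ u : List (ℕ × Fin 3),
      ρ.L 0 (ρ.wrd u w) = (((wdeg u : ℂ) + 1) / 2) • ρ.wrd u w := by
    intro u
    induction u with
    | nil =>
      simp only [BMSRep.wrd_nil, Module.End.one_apply, hL0w, wdeg]
      norm_num
    | cons g u ih =>
      rcases g with ⟨a, i⟩
      fin_cases i
      · show ρ.L 0 (ρ.L (-((a : ℤ) + 1)) (ρ.wrd u w))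
          = ((((2 * a + 2 + wdeg u : ℕ) : ℂ) + 1) / 2) • ρ.L (-((a : ℤ) + 1)) (ρ.wrd u w)
        rw [ρ.LL 0 (-((a : ℤ) + 1)) (ρ.wrd u w), if_neg (by omega), zero_smul, add_zero,
          zero_add, ih, map_smul, ← add_smul]
        congr 1
        push_cast
        ring
      · show ρ.L 0 (ρ.M (-((a : ℤ) + 1)) (ρ.wrd u w))
          = ((((2 * a + 2 + wdeg u : ℕ) : ℂ) + 1) / 2) • ρ.M (-((a : ℤ) + 1)) (ρ.wrd u w)
        rw [ρ.LM 0 (-((a : ℤ) + 1)) (ρ.wrd u w), if_neg (by omega), zero_smul, add_zero,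
          zero_add, ih, map_smul, ← add_smul]
        congr 1
        push_cast
        ring
      · show ρ.L 0 (ρ.Q (-((a : ℤ) + 1)) (ρ.wrd u w))
          = ((((2 * a + 1 + wdeg u : ℕ) : ℂ) + 1) / 2) • ρ.Q (-((a : ℤ) + 1)) (ρ.wrd u w)
        rw [ρ.LQ 0 (-((a : ℤ) + 1)) (ρ.wrd u w), zero_add, ih, map_smul, ← add_smul]
        congr 1
        push_cast
        ring
  -- nonvanishing of `v` and `w` via the PBW basis
  have hmon0 : ρ.mon ⟨0, 0, ∅, by simp, by simp, by simp⟩ v = v := by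
    simp [BMSRep.mon, BMSRep.monL, BMSRep.monM, BMSRep.monQ, tower]
  have hmon1 : ρ.mon ⟨0, 0, {1}, by simp, by simp, by simp⟩ v = ρ.Q (-1) v := by
    simp [BMSRep.mon, BMSRep.monL, BMSRep.monM, BMSRep.monQ, tower]
  have hvne : v ≠ 0 := by
    have := indep.ne_zero ⟨0, 0, ∅, by simp, by simp, by simp⟩
    rwa [hmon0] at this
  have hwne : w ≠ 0 := by
    have := indep.ne_zero ⟨0, 0, {1}, by simp, by simp, by simp⟩
    rwa [hmon1, ← hw] at this
  -- v is not in W, by eigenvalue separation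
  have hWle : W ≤ ⨆ (μ : ℂ) (_ : μ ≠ 0), (ρ.L 0).eigenspace μ := by
    rw [hWdef, Submodule.span_le]
    rintro y ⟨u, rfl⟩
    have hμ : (((wdeg u : ℂ) + 1) / 2) ≠ 0 := by
      have h1 : ((wdeg u : ℂ) + 1) ≠ 0 := Nat.cast_add_one_ne_zero (wdeg u)
      exact div_ne_zero h1 two_ne_zero
    exact Submodule.mem_iSup_of_mem _ (Submodule.mem_iSup_of_mem hμ
      (Module.End.mem_eigenspace_iff.2 (eig u)))
  have hdisj := iSupIndep_def.mp (Module.End.eigenspaces_iSupIndep (ρ.L 0)) 0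
  have hvW : v ∉ W := by
    intro hv
    have h0 : v ∈ (ρ.L 0).eigenspace 0 := Module.End.mem_eigenspace_iff.2 (by rw [hL0])
    exact hvne (Submodule.disjoint_def.mp hdisj v h0 (hWle hv))
  refine ⟨sing, ?_⟩
  rintro ⟨-, hs⟩
  rcases hs W hinv with h | h
  · rw [h] at hwW
    exact hwne (by simpa using hwW)
  · exact hvW (h ▸ Submodule.mem_top)
end

section
/- Let V be a simple module over g^{(0,−q)} of central charge (c1,c2) and t ∈ ℕ such that M_i V = 0 for all i > t and L_j V = 0 for all j > t+q, and either (t > 0 and M_t acts injectively on V) or (t = 0 and M_0 + (n^2−1)c2/24 acts injectively on V for all nonzero integers n). Then Q_{i−1/2} V = 0 for all i > t. -/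
/-- A representation of the subalgebra `g^{(0,-q)}` of the N=1 BMS superalgebra,
spanned by `L_i (i ≥ 0)`, `M_j (j ≥ -q)`, `Q_{k-1/2} (k ≥ 1)` and the central
elements; here `Q k` denotes the action of `Q_{k+1/2}` (so `k ≥ 0`), and the
commutation relations are imposed in the allowed range of indices. -/
structure BMSSubRep (q : ℕ) (V : Type*) [AddCommGroup V] [Module ℂ V] where
  L : ℤ → Module.End ℂ V
  M : ℤ → Module.End ℂ V
  Q : ℤ → Module.End ℂ V
  c1 : ℂ
  c2 : ℂ
  comm_LL : ∀ m n : ℤ, 0 ≤ m → 0 ≤ n → ⁅L m, L n⁆ = ((m : ℂ) - n) • L (m + n)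
      + (if m + n = 0 then ((m : ℂ)^3 - m) / 12 * c1 else 0) • (1 : Module.End ℂ V)
  comm_LM : ∀ m n : ℤ, 0 ≤ m → -(q : ℤ) ≤ n → ⁅L m, M n⁆ = ((m : ℂ) - n) • M (m + n)
      + (if m + n = 0 then ((m : ℂ)^3 - m) / 12 * c2 else 0) • (1 : Module.End ℂ V)
  comm_MM : ∀ m n : ℤ, -(q : ℤ) ≤ m → -(q : ℤ) ≤ n → ⁅M m, M n⁆ = 0
  comm_LQ : ∀ m k : ℤ, 0 ≤ m → 0 ≤ k →
      ⁅L m, Q k⁆ = ((m : ℂ) / 2 - ((k : ℂ) + 1/2)) • Q (m + k)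
  comm_MQ : ∀ m k : ℤ, -(q : ℤ) ≤ m → 0 ≤ k → ⁅M m, Q k⁆ = 0
  anti_QQ : ∀ k l : ℤ, 0 ≤ k → 0 ≤ l → Q k * Q l + Q l * Q k = (2 : ℂ) • M (k + l + 1)
      + (if k + l + 1 = 0 then (((k : ℂ) + 1/2)^2 - 1/4) / 3 * c2 else 0) •
          (1 : Module.End ℂ V)

namespace BMSSubRep

variable {q : ℕ} {V : Type*} [AddCommGroup V] [Module ℂ V]

/-- A submodule invariant under the action of `g^{(0,-q)}`. -/
def Invariant (ρ : BMSSubRep q V) (W : Submodule ℂ V) : Prop :=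
  ∀ w ∈ W, (∀ n : ℤ, 0 ≤ n → ρ.L n w ∈ W) ∧
    (∀ n : ℤ, -(q : ℤ) ≤ n → ρ.M n w ∈ W) ∧ (∀ k : ℤ, 0 ≤ k → ρ.Q k w ∈ W)

/-- Simplicity of a `g^{(0,-q)}`-module. -/
def IsSimple (ρ : BMSSubRep q V) : Prop :=
  (∃ v : V, v ≠ 0) ∧ ∀ W : Submodule ℂ V, ρ.Invariant W → W = ⊥ ∨ W = ⊤

end BMSSubRep

/-- Ordered product `Q a₁ * Q a₂ * ⋯` over a list of indices. -/
private noncomputable def qprodAux {V : Type*} [AddCommGroup V] [Module ℂ V]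
    (Q : ℕ → Module.End ℂ V) : List ℕ → Module.End ℂ V
  | [] => 1
  | a :: l => Q a * qprodAux Q l

/-- If the `Q a` pairwise anticommute (hence square to zero), then
`Q a` annihilates any product containing the factor `Q a`. -/
private lemma qprodAux_cancel {V : Type*} [AddCommGroup V] [Module ℂ V]
    (Q : ℕ → Module.End ℂ V)
    (anti : ∀ a b : ℕ, Q a * Q b = -(Q b * Q a)) :
    ∀ l : List ℕ, ∀ a ∈ l, Q a * qprodAux Q l = 0 := by
  have sq : ∀ a, Q a * Q a = 0 := by
    intro a
    have h2 : Q a * Q a + Q a * Q a = 0 := by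
      nth_rewrite 2 [anti a a]; exact add_neg_cancel _
    have h3 : (2 : ℂ) • (Q a * Q a) = 0 := by rw [two_smul]; exact h2
    calc Q a * Q a = (2 : ℂ)⁻¹ • ((2 : ℂ) • (Q a * Q a)) :=
          (inv_smul_smul₀ two_ne_zero _).symm
      _ = 0 := by rw [h3, smul_zero]
  intro l
  induction l with
  | nil => simp
  | cons b l ih =>
    intro a ha
    rcases List.mem_cons.mp ha with h | h
    · subst h; rw [qprodAux, ← mul_assoc, sq, zero_mul]
    · rw [qprodAux, ← mul_assoc, anti a b, neg_mul, mul_assoc, ih a h,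
        mul_zero, neg_zero]

/-- Let `V` be a simple `g^{(0,-q)}`-module of central charge `(c1,c2)` and
`t ∈ ℕ` with `M_i V = 0` for `i > t`, `L_j V = 0` for `j > t+q`, and the
injectivity conditions (a). Then `Q_{i-1/2} V = 0` for all `i > t`. -/
theorem sub_Q_annihilates {q : ℕ} {V : Type*} [AddCommGroup V] [Module ℂ V]
    (ρ : BMSSubRep q V) (hsimple : ρ.IsSimple) (t : ℕ)
    (hMt : 0 < t → Function.Injective ⇑(ρ.M (t : ℤ)))
    (hM0 : t = 0 → ∀ n : ℤ, n ≠ 0 →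
      Function.Injective
        ⇑(ρ.M 0 + (((n : ℂ)^2 - 1) / 24 * ρ.c2) • (1 : Module.End ℂ V)))
    (hM : ∀ i : ℤ, (t : ℤ) < i → ∀ x : V, ρ.M i x = 0)
    (hL : ∀ j : ℤ, (t : ℤ) + q < j → ∀ x : V, ρ.L j x = 0) :
    ∀ i : ℤ, (t : ℤ) < i → ∀ x : V, ρ.Q (i - 1) x = 0 := by
  classical
  have ht0 : (0 : ℤ) ≤ (t : ℤ) := Int.ofNat_nonneg t
  -- Operator-level vanishing of high modes of M and L
  have hMop : ∀ i : ℤ, (t : ℤ) < i → ρ.M i = 0 := by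
    intro i hi; ext x; exact hM i hi x
  have hLop : ∀ j : ℤ, (t : ℤ) + q < j → ρ.L j = 0 := by
    intro j hj; ext x; exact hL j hj x
  -- The Q's above level t anticommute (with everything nonnegative paired with them)
  have hQQ : ∀ k j : ℤ, 0 ≤ k → (t : ℤ) ≤ j →
      ρ.Q k * ρ.Q j + ρ.Q j * ρ.Q k = 0 := by
    intro k j hk hj
    have h := ρ.anti_QQ k j hk (le_trans ht0 hj)
    rw [hMop (k + j + 1) (by omega), if_neg (by omega)] at h
    simpa using h
  -- High modes of Q vanish, using L
  have hQbig : ∀ j : ℤ, (t : ℤ) + q + 2 ≤ j → ρ.Q j = 0 := by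
    intro j hj
    have h := ρ.comm_LQ j 0 (by omega) le_rfl
    rw [hLop j (by omega)] at h
    rw [Ring.lie_def, zero_mul, mul_zero, sub_zero] at h
    have hc : ((j : ℂ) / 2 - (((0 : ℤ) : ℂ) + 1 / 2) : ℂ) ≠ 0 := by
      have hj1 : (j : ℂ) ≠ 1 := by
        intro hcon
        have : j = 1 := by exact_mod_cast hcon
        omega
      intro hcon
      apply hj1
      push_cast at hcon
      linear_combination 2 * hcon
    have := h.symm
    rw [smul_eq_zero] at this
    rcases this with h' | h'
    · exact absurd h' hc
    · simpa using h'
  -- The common kernel of all Q j, j ≥ t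
  set W : Submodule ℂ V := ⨅ (j : ℤ) (_ : (t : ℤ) ≤ j), LinearMap.ker (ρ.Q j) with hW
  have hmemW : ∀ w : V, w ∈ W ↔ ∀ j : ℤ, (t : ℤ) ≤ j → ρ.Q j w = 0 := by
    intro w
    simp [hW, Submodule.mem_iInf, LinearMap.mem_ker]
  -- W is invariant
  have hinv : ρ.Invariant W := by
    intro w hw
    rw [hmemW] at hw
    refine ⟨?_, ?_, ?_⟩
    · intro n hn
      rw [hmemW]
      intro j hj
      have h := ρ.comm_LQ n j hn (le_trans ht0 hj)
      rw [Ring.lie_def, sub_eq_iff_eq_add] at h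
      have := congrArg (fun f : Module.End ℂ V => f w) h
      simp only [LinearMap.add_apply, LinearMap.smul_apply, Module.End.mul_apply] at this
      rw [hw j hj, hw (n + j) (by omega)] at this
      simpa using this.symm
    · intro n hn
      rw [hmemW]
      intro j hj
      have h := ρ.comm_MQ n j hn (le_trans ht0 hj)
      rw [Ring.lie_def, sub_eq_zero] at h
      have := congrArg (fun f : Module.End ℂ V => f w) h.symm
      simp only [Module.End.mul_apply] at this
      rw [hw j hj] at this
      simpa using this
    · intro k hk
      rw [hmemW]
      intro j hj
      have h := hQQ k j hk hj
      rw [add_eq_zero_iff_eq_neg] at h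
      have h2 : ρ.Q j * ρ.Q k = -(ρ.Q k * ρ.Q j) := by
        rw [← neg_eq_iff_eq_neg] at h
        rw [← h]
      have := congrArg (fun f : Module.End ℂ V => f w) h2
      simp only [Module.End.mul_apply, LinearMap.neg_apply] at this
      rw [hw j hj] at this
      simpa using this
  -- The finitely many possibly-nonzero Q's at levels t, ..., t+q+1
  set Qn : ℕ → Module.End ℂ V := fun a => ρ.Q ((t : ℤ) + a) with hQn
  have hanti : ∀ a b : ℕ, Qn a * Qn b = -(Qn b * Qn a) := by
    intro a b
    have h := hQQ ((t : ℤ) + a) ((t : ℤ) + b) (by omega) (by omega)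
    rw [add_eq_zero_iff_eq_neg] at h
    exact h
  -- 1 ≠ 0 as an endomorphism
  obtain ⟨v₀, hv₀⟩ := hsimple.1
  have hone : (1 : Module.End ℂ V) ≠ 0 := by
    intro h
    apply hv₀
    have := congrArg (fun f : Module.End ℂ V => f v₀) h
    simpa using this
  -- The set of lengths of nodup lists with nonzero product
  set s : Set ℕ := {n | ∃ l : List ℕ, l.Nodup ∧ (∀ a ∈ l, a < q + 2) ∧
      qprodAux Qn l ≠ 0 ∧ l.length = n} with hs
  have hs0 : 0 ∈ s := ⟨[], List.nodup_nil, by simp, by simpa [qprodAux] using hone, rfl⟩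
  have hsbdd : ∀ n ∈ s, n ≤ q + 2 := by
    rintro n ⟨l, hnd, hlt, -, hlen⟩
    have hsub : l.toFinset ⊆ Finset.range (q + 2) := by
      intro a ha
      rw [List.mem_toFinset] at ha
      exact Finset.mem_range.mpr (hlt a ha)
    have := Finset.card_le_card hsub
    rw [List.toFinset_card_of_nodup hnd, Finset.card_range] at this
    omega
  have hbdd : BddAbove s := ⟨q + 2, fun n hn => hsbdd n hn⟩
  have hnmem : sSup s ∈ s := Nat.sSup_mem ⟨0, hs0⟩ hbdd
  obtain ⟨l, hnd, hlt, hne, hlen⟩ := hnmem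
  -- any strictly longer admissible list has zero product
  have hmax : ∀ l' : List ℕ, l'.Nodup → (∀ a ∈ l', a < q + 2) →
      sSup s < l'.length → qprodAux Qn l' = 0 := by
    intro l' hnd' hlt' hlong
    by_contra hne'
    have : l'.length ∈ s := ⟨l', hnd', hlt', hne', rfl⟩
    exact absurd (le_csSup hbdd this) (not_le.mpr hlong)
  -- pick a vector not killed by the maximal product
  have : ∃ v : V, qprodAux Qn l v ≠ 0 := by
    by_contra hcon
    push_neg at hcon
    exact hne (by ext x; exact hcon x)
  obtain ⟨v, hv⟩ := this
  -- it lands in W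
  have hvW : qprodAux Qn l v ∈ W := by
    rw [hmemW]
    intro j hj
    by_cases hjbig : (t : ℤ) + q + 2 ≤ j
    · rw [hQbig j hjbig]; simp
    · -- j = t + a with a < q + 2
      set a : ℕ := (j - t).toNat with ha
      have hja : j = (t : ℤ) + a := by omega
      have haq : a < q + 2 := by omega
      have hQj : ρ.Q j = Qn a := congrArg ρ.Q hja
      rw [hQj]
      by_cases hmem : a ∈ l
      · have := qprodAux_cancel Qn hanti l a hmem
        have := congrArg (fun f : Module.End ℂ V => f v) this
        simpa using this
      · have hcons : Qn a * qprodAux Qn l = qprodAux Qn (a :: l) := rfl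
        have hnd' : (a :: l).Nodup := List.nodup_cons.mpr ⟨hmem, hnd⟩
        have hlt' : ∀ b ∈ a :: l, b < q + 2 := by
          intro b hb
          rcases List.mem_cons.mp hb with h | h
          · omega
          · exact hlt b h
        have hz : qprodAux Qn (a :: l) = 0 := by
          apply hmax _ hnd' hlt'
          rw [List.length_cons, hlen]
          omega
        have := congrArg (fun f : Module.End ℂ V => f v) (hcons.trans hz)
        simpa using this
  -- W is nonzero, hence all of V
  have hWtop : W = ⊤ := by
    rcases hsimple.2 W hinv with hbot | htop
    · exfalso
      rw [hbot] at hvW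
      exact hv (Submodule.mem_bot ℂ |>.mp hvW)
    · exact htop
  intro i hi x
  have hx : x ∈ W := hWtop ▸ Submodule.mem_top
  rw [hmemW] at hx
  exact hx (i - 1) (by omega)
end

section
/- If W is a simple smooth module over the N=1 BMS superalgebra of central charge (c1,c2), then there exists N ∈ ℤ_+ such that the actions of L_i, M_i, Q_{i−1/2} on W are locally nilpotent for all i ≥ N. -/
section LocNilAux

variable {V : Type*} [AddCommGroup V] [Module ℂ V]

/-- Local nilpotency of an endomorphism at a vector. -/
def LocNil (A : Module.End ℂ V) (w : V) : Prop := ∃ n : ℕ, (A ^ n) w = 0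

lemma LocNil.add {A : Module.End ℂ V} {x y : V} (hx : LocNil A x) (hy : LocNil A y) :
    LocNil A (x + y) := by
  obtain ⟨n1, h1⟩ := hx
  obtain ⟨n2, h2⟩ := hy
  refine ⟨n1 + n2, ?_⟩
  have e1 : (A ^ (n1 + n2)) x = 0 := by
    rw [add_comm, pow_add, Module.End.mul_apply, h1, map_zero]
  have e2 : (A ^ (n1 + n2)) y = 0 := by
    rw [pow_add, Module.End.mul_apply, h2, map_zero]
  rw [map_add, e1, e2, add_zero]

lemma LocNil.smul {A : Module.End ℂ V} {x : V} (c : ℂ) (hx : LocNil A x) :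
    LocNil A (c • x) := by
  obtain ⟨n, h⟩ := hx
  exact ⟨n, by rw [map_smul, h, smul_zero]⟩

lemma LocNil.step {A : Module.End ℂ V} {w : V} (h : LocNil A (A w)) : LocNil A w := by
  obtain ⟨n, hn⟩ := h
  exact ⟨n + 1, by rw [pow_succ, Module.End.mul_apply]; exact hn⟩

/-- Key lemma, self case: if `[A, g m] = α m • g (m+i) + β m • 1` with `i ≥ 1`, the
family `g` is smooth, and `A` is locally nilpotent at `w`, then `A` is locally
nilpotent at `g m w`. -/
lemma key_self (A : Module.End ℂ V) (i : ℤ) (hi : 1 ≤ i)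
    (g : ℤ → Module.End ℂ V) (α β : ℤ → ℂ)
    (hrel : ∀ m : ℤ, ∀ v : V, A (g m v) = g m (A v) + α m • g (m + i) v + β m • v)
    (hsm : ∀ w : V, ∃ s : ℤ, ∀ m : ℤ, s ≤ m → g m w = 0) :
    ∀ n0 : ℕ, ∀ w : V, (A ^ n0) w = 0 → ∀ m : ℤ, LocNil A (g m w) := by
  intro n0
  induction n0 with
  | zero =>
    intro w hw m
    simp only [pow_zero, Module.End.one_apply] at hw
    subst hw
    exact ⟨0, by simp⟩
  | succ n0 ih =>
    intro w hw
    obtain ⟨s, hs⟩ := hsm w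
    have main : ∀ d : ℕ, ∀ m : ℤ, s - m ≤ (d : ℤ) → LocNil A (g m w) := by
      intro d
      induction d with
      | zero =>
        intro m hm
        have hsm' : s ≤ m := by omega
        exact ⟨0, by simp [hs m hsm']⟩
      | succ d ihd =>
        intro m hm
        by_cases hms : s ≤ m
        · exact ⟨0, by simp [hs m hms]⟩
        · have h1 : LocNil A (g m (A w)) := by
            refine ih (A w) ?_ m
            rw [← Module.End.mul_apply, ← pow_succ]
            exact hw
          have h2 : LocNil A (g (m + i) w) := ihd (m + i) (by omega)
          have h3 : LocNil A w := ⟨n0 + 1, hw⟩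
          apply LocNil.step
          rw [hrel m w]
          exact (h1.add (h2.smul _)).add (h3.smul _)
    intro m
    exact main (s - m).toNat m (by omega)

/-- Key lemma, mixed case: if `[A, f m]` is a combination of `g`-modes and the
identity, and `A` is locally nilpotent at all `g`-translates of nilpotent
vectors, then local nilpotency propagates from `w` to `f m w`. -/
lemma key_mixed (A : Module.End ℂ V) (f g : ℤ → Module.End ℂ V)
    (hg : ∀ w : V, LocNil A w → ∀ m : ℤ, LocNil A (g m w))
    (hrel : ∀ m : ℤ, ∃ (c1 c2 : ℂ) (m' : ℤ), ∀ v : V,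
      A (f m v) = f m (A v) + c1 • g m' v + c2 • v) :
    ∀ n0 : ℕ, ∀ w : V, (A ^ n0) w = 0 → ∀ m : ℤ, LocNil A (f m w) := by
  intro n0
  induction n0 with
  | zero =>
    intro w hw m
    simp only [pow_zero, Module.End.one_apply] at hw
    subst hw
    exact ⟨0, by simp⟩
  | succ n0 ih =>
    intro w hw m
    obtain ⟨c1, c2, m', hr⟩ := hrel m
    have h1 : LocNil A (f m (A w)) := by
      refine ih (A w) ?_ m
      rw [← Module.End.mul_apply, ← pow_succ]
      exact hw
    have h3 : LocNil A w := ⟨n0 + 1, hw⟩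
    have h2 : LocNil A (g m' w) := hg w h3 m'
    apply LocNil.step
    rw [hr w]
    exact (h1.add (h2.smul _)).add (h3.smul _)

end LocNilAux

/-- If `W` is a simple smooth module over the N=1 BMS superalgebra, then there
is `N ∈ ℤ_+` such that `L_i, M_i, Q_{i-1/2}` act locally nilpotently on `W`
for all `i ≥ N`. -/
theorem simple_smooth_locally_nilpotent {V : Type*} [AddCommGroup V] [Module ℂ V]
    (ρ : BMSRep V) (hsmooth : ρ.IsSmooth) (hsimple : ρ.IsSimple) :
    ∃ N : ℤ, 1 ≤ N ∧ ∀ i : ℤ, N ≤ i → ∀ w : V,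
      (∃ n : ℕ, (ρ.L i ^ n) w = 0) ∧
      (∃ n : ℕ, (ρ.M i ^ n) w = 0) ∧
      (∃ n : ℕ, (ρ.Q (i - 1) ^ n) w = 0) := by
  obtain ⟨⟨v, hv⟩, hmax⟩ := hsimple
  obtain ⟨s, hs⟩ := hsmooth v
  set N : ℤ := max s 1 with hNdef
  have hN1 : (1 : ℤ) ≤ N := le_max_right _ _
  -- pointwise bracket relations
  have relLL : ∀ i m : ℤ, ∀ u : V, ρ.L i (ρ.L m u) = ρ.L m (ρ.L i u)
      + ((i : ℂ) - m) • ρ.L (m + i) u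
      + (if i + m = 0 then ((i : ℂ)^3 - i) / 12 * ρ.c1 else 0) • u := by
    intro i m u
    have h := DFunLike.congr_fun (ρ.comm_LL i m) u
    simp only [Ring.lie_def, LinearMap.sub_apply, Module.End.mul_apply, LinearMap.add_apply,
      LinearMap.smul_apply, Module.End.one_apply] at h
    rw [sub_eq_iff_eq_add'] at h
    rw [h, add_comm m i]
    ring_nf
    abel
  have relLM : ∀ i m : ℤ, ∀ u : V, ρ.L i (ρ.M m u) = ρ.M m (ρ.L i u)
      + ((i : ℂ) - m) • ρ.M (m + i) u
      + (if i + m = 0 then ((i : ℂ)^3 - i) / 12 * ρ.c2 else 0) • u := by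
    intro i m u
    have h := DFunLike.congr_fun (ρ.comm_LM i m) u
    simp only [Ring.lie_def, LinearMap.sub_apply, Module.End.mul_apply, LinearMap.add_apply,
      LinearMap.smul_apply, Module.End.one_apply] at h
    rw [sub_eq_iff_eq_add'] at h
    rw [h, add_comm m i]
    ring_nf
    abel
  have relLQ : ∀ i m : ℤ, ∀ u : V, ρ.L i (ρ.Q m u) = ρ.Q m (ρ.L i u)
      + ((i : ℂ) / 2 - ((m : ℂ) + 1/2)) • ρ.Q (m + i) u + (0 : ℂ) • u := by
    intro i m u
    have h := DFunLike.congr_fun (ρ.comm_LQ i m) u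
    simp only [Ring.lie_def, LinearMap.sub_apply, Module.End.mul_apply,
      LinearMap.smul_apply] at h
    rw [sub_eq_iff_eq_add'] at h
    rw [h, add_comm m i, zero_smul, add_zero]
  have relMM : ∀ i m : ℤ, ∀ u : V, ρ.M i (ρ.M m u) = ρ.M m (ρ.M i u)
      + (0 : ℂ) • ρ.M (m + i) u + (0 : ℂ) • u := by
    intro i m u
    have h := DFunLike.congr_fun (ρ.comm_MM i m) u
    simp only [Ring.lie_def, LinearMap.sub_apply, Module.End.mul_apply,
      LinearMap.zero_apply] at h
    rw [sub_eq_zero] at h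
    rw [h, zero_smul, zero_smul, add_zero, add_zero]
  have relMQ : ∀ i m : ℤ, ∀ u : V, ρ.M i (ρ.Q m u) = ρ.Q m (ρ.M i u) := by
    intro i m u
    have h := DFunLike.congr_fun (ρ.comm_MQ i m) u
    simp only [Ring.lie_def, LinearMap.sub_apply, Module.End.mul_apply,
      LinearMap.zero_apply] at h
    rw [sub_eq_zero] at h
    exact h
  have relML : ∀ i m : ℤ, ∀ u : V, ρ.M i (ρ.L m u) = ρ.L m (ρ.M i u)
      + (-((m : ℂ) - i)) • ρ.M (m + i) u
      + (-(if m + i = 0 then ((m : ℂ)^3 - m) / 12 * ρ.c2 else 0)) • u := by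
    intro i m u
    have h := DFunLike.congr_fun (ρ.comm_LM m i) u
    simp only [Ring.lie_def, LinearMap.sub_apply, Module.End.mul_apply, LinearMap.add_apply,
      LinearMap.smul_apply, Module.End.one_apply] at h
    -- h : L m (M i u) - M i (L m u) = ((m:ℂ)-i) • M (m+i) u + (if ..) • u
    rw [sub_eq_iff_eq_add'] at h
    -- h : L m (M i u) = M i (L m u) + (...)
    have := congrArg (fun x => x - (((m : ℂ) - i) • ρ.M (m + i) u
      + (if m + i = 0 then ((m : ℂ)^3 - m) / 12 * ρ.c2 else 0) • u)) h
    simp only [add_sub_cancel_right] at this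
    rw [← this]
    simp only [neg_smul]
    abel
  -- smoothness of each family
  have smL : ∀ w : V, ∃ s' : ℤ, ∀ m : ℤ, s' ≤ m → ρ.L m w = 0 := by
    intro w
    obtain ⟨s', h⟩ := hsmooth w
    exact ⟨s', fun m hm => (h m hm).1⟩
  have smM : ∀ w : V, ∃ s' : ℤ, ∀ m : ℤ, s' ≤ m → ρ.M m w = 0 := by
    intro w
    obtain ⟨s', h⟩ := hsmooth w
    exact ⟨s', fun m hm => (h m hm).2.1⟩
  have smQ : ∀ w : V, ∃ s' : ℤ, ∀ m : ℤ, s' ≤ m → ρ.Q m w = 0 := by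
    intro w
    obtain ⟨s', h⟩ := hsmooth w
    refine ⟨s' - 1, fun m hm => ?_⟩
    have := (h (m + 1) (by omega)).2.2
    simpa using this
  -- the invariant submodule of doubly locally nilpotent vectors
  let S : Submodule ℂ V :=
    { carrier := {w | ∀ i : ℤ, N ≤ i → LocNil (ρ.L i) w ∧ LocNil (ρ.M i) w}
      add_mem' := fun hx hy i hi => ⟨((hx i hi).1).add ((hy i hi).1),
        ((hx i hi).2).add ((hy i hi).2)⟩
      zero_mem' := fun i _ => ⟨⟨0, by simp⟩, ⟨0, by simp⟩⟩
      smul_mem' := fun c x hx i hi => ⟨((hx i hi).1).smul c, ((hx i hi).2).smul c⟩ }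
  have hmemS : ∀ w : V, w ∈ S ↔ ∀ i : ℤ, N ≤ i → LocNil (ρ.L i) w ∧ LocNil (ρ.M i) w :=
    fun w => Iff.rfl
  -- key nilpotency transfer, for M i with g = M:
  have nilMM : ∀ i : ℤ, 1 ≤ i → ∀ w : V, LocNil (ρ.M i) w → ∀ m : ℤ,
      LocNil (ρ.M i) (ρ.M m w) := by
    intro i hi w hw m
    obtain ⟨n0, hn0⟩ := hw
    exact key_self (ρ.M i) i hi ρ.M (fun _ => 0) (fun _ => 0) (relMM i) smM n0 w hn0 m
  have hinv : ρ.Invariant S := by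
    intro w hw n
    refine ⟨?_, ?_, ?_⟩ <;> intro i hi
    · -- L n w
      have hi1 : (1 : ℤ) ≤ i := le_trans hN1 hi
      obtain ⟨hLi, hMi⟩ := hw i hi
      obtain ⟨nL, hnL⟩ := hLi
      obtain ⟨nM, hnM⟩ := hMi
      constructor
      · exact key_self (ρ.L i) i hi1 ρ.L (fun m => (i : ℂ) - m)
          (fun m => if i + m = 0 then ((i : ℂ)^3 - i) / 12 * ρ.c1 else 0)
          (relLL i) smL nL w hnL n
      · exact key_mixed (ρ.M i) ρ.L ρ.M (nilMM i hi1)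
          (fun m => ⟨-((m : ℂ) - i), -(if m + i = 0 then ((m : ℂ)^3 - m) / 12 * ρ.c2 else 0),
            m + i, relML i m⟩) nM w hnM n
    · -- M n w
      have hi1 : (1 : ℤ) ≤ i := le_trans hN1 hi
      obtain ⟨hLi, hMi⟩ := hw i hi
      obtain ⟨nL, hnL⟩ := hLi
      obtain ⟨nM, hnM⟩ := hMi
      constructor
      · exact key_self (ρ.L i) i hi1 ρ.M (fun m => (i : ℂ) - m)
          (fun m => if i + m = 0 then ((i : ℂ)^3 - i) / 12 * ρ.c2 else 0)
          (relLM i) smM nL w hnL n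
      · exact ⟨nM, by
          have : ∀ k : ℕ, (ρ.M i ^ k) (ρ.M n w) = ρ.M n ((ρ.M i ^ k) w) := by
            intro k
            induction k with
            | zero => simp
            | succ k ihk =>
              rw [pow_succ', Module.End.mul_apply, ihk, Module.End.mul_apply]
              have := relMM i n ((ρ.M i ^ k) w)
              simpa using this
          rw [this nM, hnM, map_zero]⟩
    · -- Q n w
      have hi1 : (1 : ℤ) ≤ i := le_trans hN1 hi
      obtain ⟨hLi, hMi⟩ := hw i hi
      obtain ⟨nL, hnL⟩ := hLi
      obtain ⟨nM, hnM⟩ := hMi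
      constructor
      · exact key_self (ρ.L i) i hi1 ρ.Q
          (fun m => (i : ℂ) / 2 - ((m : ℂ) + 1/2)) (fun _ => 0)
          (relLQ i) smQ nL w hnL n
      · exact ⟨nM, by
          have : ∀ k : ℕ, (ρ.M i ^ k) (ρ.Q n w) = ρ.Q n ((ρ.M i ^ k) w) := by
            intro k
            induction k with
            | zero => simp
            | succ k ihk =>
              rw [pow_succ', Module.End.mul_apply, ihk, Module.End.mul_apply, relMQ i n]
          rw [this nM, hnM, map_zero]⟩
  have hST : S = ⊤ := by
    rcases hmax S hinv with h | h
    · exfalso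
      have hvS : v ∈ S := by
        intro i hi
        have hsi : s ≤ i := le_trans (le_max_left _ _) hi
        exact ⟨⟨1, by simpa using (hs i hsi).1⟩, ⟨1, by simpa using (hs i hsi).2.1⟩⟩
      rw [h] at hvS
      exact hv (Submodule.mem_bot ℂ |>.mp hvS)
    · exact h
  refine ⟨N, hN1, fun i hi w => ?_⟩
  have hwS : w ∈ S := by rw [hST]; trivial
  have hi1 : (1 : ℤ) ≤ i := le_trans hN1 hi
  obtain ⟨hLi, hMi⟩ := hwS i hi
  refine ⟨hLi, hMi, ?_⟩
  -- Q (i-1) ^ 2 = M (2i - 1)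
  have hQQ : ρ.Q (i - 1) ^ 2 = ρ.M (2 * i - 1) := by
    have h := ρ.anti_QQ (i - 1) (i - 1)
    have hidx : (i - 1) + (i - 1) + 1 = 2 * i - 1 := by ring
    rw [hidx] at h
    rw [if_neg (by omega : ¬ (2 * i - 1 = 0))] at h
    rw [zero_smul, add_zero] at h
    have h2 : (2 : ℂ) • (ρ.Q (i - 1) ^ 2) = (2 : ℂ) • ρ.M (2 * i - 1) := by
      rw [← h, sq, two_smul]
    exact smul_right_injective (Module.End ℂ V) (two_ne_zero) h2
  obtain ⟨nM, hnM⟩ := (hwS (2 * i - 1) (by omega)).2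
  refine ⟨2 * nM, ?_⟩
  rw [pow_mul, hQQ]
  exact hnM
end
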